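/- Let p(z) ∈ ℤ[z] have degree d ≥ 2 with positive leading coefficient a_d, and set m_s(k) = p(k+s) − p(k), k₁(k) = max{t : p(t) < p(k)/2}, k₀(k) = max{t : p(t) < 2p(k) − 4m_1(k)}. Then k₁(k)/k → 2^{−1/d} and k₀(k)/k → 2^{1/d} as k → ∞. -/

import Mathlib

/-!
A real polynomial `Q` of degree `n ≥ 1` with positive leading coefficient `L` is monotone on a
half-line and satisfies `Q(b k + s) ~ L b^n k^n`. Hence if `W k ~ L c^n k^n`, the largest integer
`r k` with `Q(r k) < W k` satisfies `b k - 1 < r k < b' k` eventually for all `0 < b < c < b'`,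
so `r k / k → c`. Both thresholds are of this form: `p(k)/2 ~ a_d k^d / 2` gives `c = 2^(-1/d)`,
and `2 p(k) - 4 m₁(k) = 6 p(k) - 4 p(k+1) ~ 2 a_d k^d` gives `c = 2^(1/d)`.
-/

open Filter Topology Polynomial Asymptotics

section Threshold

variable {f : ℝ → ℝ} {M w x : ℝ} {r : ℤ}

theorem sub_one_lt_of_isGreatest_setOf_lt (hf : MonotoneOn f (Set.Ici M))
    (hr : IsGreatest {t : ℤ | f t < w} r) (hx : M + 1 ≤ x) (hfx : f x < w) :
    x - 1 < r := by
  have hfloor : M ≤ ⌊x⌋ := by linarith [Int.sub_one_lt_floor x]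
  have hmem : ⌊x⌋ ∈ {t : ℤ | f t < w} :=
    (hf hfloor (hfloor.trans (Int.floor_le x)) (Int.floor_le x)).trans_lt hfx
  calc x - 1 < ⌊x⌋ := Int.sub_one_lt_floor x
    _ ≤ r := by exact_mod_cast hr.2 hmem

theorem lt_of_isGreatest_setOf_lt (hf : MonotoneOn f (Set.Ici M))
    (hr : IsGreatest {t : ℤ | f t < w} r) (hx : M ≤ x) (hfx : w ≤ f x) :
    (r : ℝ) < x := by
  by_contra! hrx
  exact (hfx.trans (hf hx (hx.trans hrx) hrx)).not_gt hr.1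

end Threshold

namespace Polynomial

theorem coeff_sum_range_C_mul_X_pow {R : Type*} [Semiring R] (f : ℕ → R) (d : ℕ) :
    (∑ i ∈ Finset.range (d + 1), C (f i) * X ^ i).coeff d = f d := by
  simp

theorem natDegree_sum_range_C_mul_X_pow {R : Type*} [Semiring R] (f : ℕ → R) {d : ℕ}
    (hd : f d ≠ 0) : (∑ i ∈ Finset.range (d + 1), C (f i) * X ^ i).natDegree = d := by
  refine le_antisymm (natDegree_sum_le_of_forall_le _ _ fun i hi => ?_)
    (le_natDegree_of_ne_zero (by rwa [coeff_sum_range_C_mul_X_pow]))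
  exact (natDegree_C_mul_X_pow_le _ _).trans (Nat.lt_succ_iff.mp (Finset.mem_range.mp hi))

theorem leadingCoeff_sum_range_C_mul_X_pow {R : Type*} [Semiring R] (f : ℕ → R) {d : ℕ}
    (hd : f d ≠ 0) : (∑ i ∈ Finset.range (d + 1), C (f i) * X ^ i).leadingCoeff = f d := by
  rw [leadingCoeff, natDegree_sum_range_C_mul_X_pow f hd, coeff_sum_range_C_mul_X_pow]

theorem tendsto_eval_div_pow_natDegree (Q : ℝ[X]) :
    Tendsto (fun x => Q.eval x / x ^ Q.natDegree) atTop (𝓝 Q.leadingCoeff) := by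
  refine (Q.isEquivalent_atTop_lead.div IsEquivalent.refl).symm.tendsto_nhds ?_
  refine tendsto_const_nhds.congr' ?_
  filter_upwards [eventually_gt_atTop 0] with x hx
  simp only [Pi.div_apply]
  field_simp

theorem tendsto_eval_mul_natCast_add_div_pow (Q : ℝ[X]) {b : ℝ} (hb : 0 < b) (s : ℝ) :
    Tendsto (fun k : ℕ => Q.eval (b * k + s) / (k : ℝ) ^ Q.natDegree) atTop
      (𝓝 (Q.leadingCoeff * b ^ Q.natDegree)) := by
  have hlin : Tendsto (fun k : ℕ => b * k + s) atTop atTop :=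
    tendsto_atTop_add_const_right _ s (tendsto_natCast_atTop_atTop.const_mul_atTop hb)
  have hratio : Tendsto (fun k : ℕ => b + s / k) atTop (𝓝 b) := by
    simpa using tendsto_const_nhds.add
      ((tendsto_const_nhds (x := s)).div_atTop tendsto_natCast_atTop_atTop)
  refine (((tendsto_eval_div_pow_natDegree Q).comp hlin).mul (hratio.pow _)).congr' ?_
  filter_upwards [eventually_gt_atTop 0, hlin.eventually_gt_atTop 0] with k hk hbk
  have hk' : (0 : ℝ) < k := Nat.cast_pos.mpr hk
  simp only [Function.comp_apply]
  rw [show b + s / k = (b * k + s) / k by field_simp, div_pow]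
  field_simp

theorem eventually_nonneg_eval {Q : ℝ[X]} (hQ : 0 ≤ Q.leadingCoeff) :
    ∀ᶠ x in atTop, 0 ≤ Q.eval x := by
  rcases hQ.eq_or_lt with hQ | hQ
  · simp [leadingCoeff_eq_zero.mp hQ.symm]
  filter_upwards [Q.tendsto_eval_div_pow_natDegree.eventually_const_lt hQ,
    eventually_gt_atTop 0] with x hdiv hx
  exact (div_pos_iff_of_pos_right (pow_pos hx _)).mp hdiv |>.le

theorem exists_monotoneOn_eval_Ici {Q : ℝ[X]} (hQ : 0 ≤ Q.leadingCoeff) :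
    ∃ M, MonotoneOn (fun x => Q.eval x) (Set.Ici M) := by
  have hQ' : 0 ≤ (derivative Q).leadingCoeff := by
    rw [leadingCoeff_derivative]; positivity
  obtain ⟨M, hM⟩ := eventually_atTop.mp (eventually_nonneg_eval hQ')
  refine ⟨M, monotoneOn_of_deriv_nonneg (convex_Ici M) Q.continuous.continuousOn
    Q.differentiable.differentiableOn fun x hx => ?_⟩
  rw [interior_Ici] at hx
  simpa using hM x (le_of_lt hx)

variable {Q : ℝ[X]} {W : ℕ → ℝ} {c a : ℝ} {r : ℕ → ℤ}

theorem eventually_lt_div_of_isGreatest_eval_lt (hdeg : Q.natDegree ≠ 0)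
    (hQ : 0 < Q.leadingCoeff) (hc : 0 < c)
    (hW : Tendsto (fun k : ℕ => W k / (k : ℝ) ^ Q.natDegree) atTop
      (𝓝 (Q.leadingCoeff * c ^ Q.natDegree)))
    (hr : ∀ᶠ k in atTop, IsGreatest {t : ℤ | Q.eval (t : ℝ) < W k} (r k)) (ha : a < c) :
    ∀ᶠ k in atTop, a < (r k : ℝ) / k := by
  obtain ⟨M, hM⟩ := exists_monotoneOn_eval_Ici hQ.le
  obtain ⟨b, hab, hb, hbc⟩ : ∃ b, a < b ∧ 0 < b ∧ b < c :=
    ⟨max ((a + c) / 2) (c / 2), by simp only [lt_max_iff]; left; linarith,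
      by positivity, by simp only [max_lt_iff]; constructor <;> linarith⟩
  have hb' := (tendsto_eval_mul_natCast_add_div_pow Q hb 0).eventually_lt hW (by gcongr)
  have hbk := tendsto_natCast_atTop_atTop.const_mul_atTop hb
  filter_upwards [hb', hr, hbk.eventually_ge_atTop (M + 1),
    tendsto_natCast_atTop_atTop.eventually_gt_atTop (1 / (b - a)),
    eventually_gt_atTop 0] with k hbW hrk hMk hk hk0
  have hk0' : (0 : ℝ) < k := Nat.cast_pos.mpr hk0
  rw [add_zero, div_lt_div_iff_of_pos_right (by positivity)] at hbW
  have hlow := sub_one_lt_of_isGreatest_setOf_lt hM hrk hMk hbW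
  rw [div_lt_iff₀ (sub_pos.mpr hab)] at hk
  rw [lt_div_iff₀ hk0']
  nlinarith

theorem eventually_div_lt_of_isGreatest_eval_lt (hdeg : Q.natDegree ≠ 0)
    (hQ : 0 < Q.leadingCoeff) (hc : 0 < c)
    (hW : Tendsto (fun k : ℕ => W k / (k : ℝ) ^ Q.natDegree) atTop
      (𝓝 (Q.leadingCoeff * c ^ Q.natDegree)))
    (hr : ∀ᶠ k in atTop, IsGreatest {t : ℤ | Q.eval (t : ℝ) < W k} (r k)) (ha : c < a) :
    ∀ᶠ k in atTop, (r k : ℝ) / k < a := by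
  obtain ⟨M, hM⟩ := exists_monotoneOn_eval_Ici hQ.le
  have ha' : 0 < a := hc.trans ha
  have haW := hW.eventually_lt (tendsto_eval_mul_natCast_add_div_pow Q ha' 0) (by gcongr)
  have hak := tendsto_natCast_atTop_atTop.const_mul_atTop ha'
  filter_upwards [haW, hr, hak.eventually_ge_atTop M, eventually_gt_atTop 0]
    with k haW hrk hMk hk0
  have hk0' : (0 : ℝ) < k := Nat.cast_pos.mpr hk0
  rw [add_zero, div_lt_div_iff_of_pos_right (by positivity)] at haW
  rw [div_lt_iff₀ hk0']
  exact lt_of_isGreatest_setOf_lt hM hrk hMk haW.le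

theorem tendsto_div_of_isGreatest_eval_lt (hdeg : Q.natDegree ≠ 0)
    (hQ : 0 < Q.leadingCoeff) (hc : 0 < c)
    (hW : Tendsto (fun k : ℕ => W k / (k : ℝ) ^ Q.natDegree) atTop
      (𝓝 (Q.leadingCoeff * c ^ Q.natDegree)))
    (hr : ∀ᶠ k in atTop, IsGreatest {t : ℤ | Q.eval (t : ℝ) < W k} (r k)) :
    Tendsto (fun k : ℕ => (r k : ℝ) / k) atTop (𝓝 c) :=
  tendsto_order.2 ⟨fun _ ha => eventually_lt_div_of_isGreatest_eval_lt hdeg hQ hc hW hr ha,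
    fun _ ha => eventually_div_lt_of_isGreatest_eval_lt hdeg hQ hc hW hr ha⟩

end Polynomial

theorem threshold_asymptotics (d : ℕ) (hd : 2 ≤ d) (a : ℕ → ℤ) (ha : 0 < a d)
    (P : ℤ → ℤ) (hP : ∀ z, P z = ∑ i ∈ Finset.range (d + 1), a i * z ^ i)
    (k1 k0 : ℕ → ℤ) (K : ℕ)
    (hk1 : ∀ k : ℕ, K ≤ k → 2 * P (k1 k) < P k ∧ ∀ t : ℤ, 2 * P t < P k → t ≤ k1 k)
    (hk0 : ∀ k : ℕ, K ≤ k →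
      P (k0 k) < 2 * P k - 4 * (P ((k : ℤ) + 1) - P k) ∧
      ∀ t : ℤ, P t < 2 * P k - 4 * (P ((k : ℤ) + 1) - P k) → t ≤ k0 k) :
    Filter.Tendsto (fun k : ℕ => (k1 k : ℝ) / k) Filter.atTop
      (nhds ((2 : ℝ) ^ (-(1 : ℝ) / d))) ∧
    Filter.Tendsto (fun k : ℕ => (k0 k : ℝ) / k) Filter.atTop
      (nhds ((2 : ℝ) ^ ((1 : ℝ) / d))) := by
  set Q : ℝ[X] := ∑ i ∈ Finset.range (d + 1), C (a i : ℝ) * X ^ i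
  have had : (a d : ℝ) ≠ 0 := by exact_mod_cast ha.ne'
  have hQdeg : Q.natDegree = d := natDegree_sum_range_C_mul_X_pow _ had
  have hQlead : Q.leadingCoeff = a d := leadingCoeff_sum_range_C_mul_X_pow _ had
  have hQpos : 0 < Q.leadingCoeff := hQlead ▸ Int.cast_pos.mpr ha
  have hPQ (z : ℤ) : (P z : ℝ) = Q.eval (z : ℝ) := by simp [Q, hP, eval_finsetSum]
  have hQk (s : ℝ) : Tendsto (fun k : ℕ => Q.eval (k + s) / (k : ℝ) ^ d) atTop (𝓝 (a d)) := by
    simpa [hQdeg, hQlead] using tendsto_eval_mul_natCast_add_div_pow Q one_pos s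
  have hpow (y : ℝ) : ((2 : ℝ) ^ (y / d)) ^ d = 2 ^ y := by
    rw [← Real.rpow_mul_natCast zero_le_two, div_mul_cancel₀ y (by positivity)]
  have hdeg : Q.natDegree ≠ 0 := by omega
  refine ⟨tendsto_div_of_isGreatest_eval_lt (W := fun k => (P k : ℝ) / 2)
      hdeg hQpos (by positivity) ?_ (eventually_atTop.2 ⟨K, fun k hk => ?_⟩),
    tendsto_div_of_isGreatest_eval_lt (W := fun k => ((2 * P k - 4 * (P (k + 1) - P k) : ℤ) : ℝ))
      hdeg hQpos (by positivity) ?_ (eventually_atTop.2 ⟨K, fun k hk => ?_⟩)⟩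
  · rw [hQdeg, hQlead, hpow, Real.rpow_neg_one, ← div_eq_mul_inv]
    refine ((hQk 0).div_const 2).congr fun k => ?_
    simp [hPQ, div_right_comm]
  · convert (show IsGreatest {t : ℤ | 2 * P t < P k} (k1 k) from hk1 k hk) using 3 with t
    rw [← hPQ, lt_div_iff₀ two_pos, mul_comm]
    norm_cast
  · rw [hQdeg, hQlead, hpow, Real.rpow_one]
    have h := ((hQk 0).const_mul 6).sub ((hQk 1).const_mul 4)
    rw [show 6 * (a d : ℝ) - 4 * a d = a d * 2 by ring] at h
    refine h.congr fun k => ?_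
    push_cast [hPQ, add_zero]
    ring
  · convert (show IsGreatest {t : ℤ | P t < 2 * P k - 4 * (P (k + 1) - P k)} (k0 k)
      from hk0 k hk) using 3 with t
    rw [← hPQ]
    norm_cast
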